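/- arXiv:2602.20675 — 7 statements merged into one kernel-verified Lean document; each statement's English description precedes it below -/
import Mathlib

section
/- Let u, P_rr, P_θθ : J → ℝ be smooth functions on a nonempty open interval J ⊆ (0, ∞) satisfying the axisymmetric relaxed micromorphic equilibrium system (E1), (E2), (E3). Then for every r ∈ J: 2·μ_m·(P_rr'(r) − (P_θθ(r) − P_rr(r))/r) + (κ_m − μ_m)·(P_rr + P_θθ)'(r) = 0. -/
/-- From the axisymmetric relaxed micromorphic equilibrium system (E1)-(E3) it follows that
`2 μ_m (P_rr' − (P_θθ − P_rr)/r) + (κ_m − μ_m)(P_rr + P_θθ)' = 0` on J. -/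
theorem stmt2
    (μe μm κe κm m : ℝ) (hμe : 0 < μe) (hμm : 0 < μm) (hκe : 0 < κe) (hκm : 0 < κm)
    (hm : 0 < m) (lame lamm : ℝ) (hlame : lame = κe - μe) (hlamm : lamm = κm - μm)
    (J : Set ℝ) (p q : ℝ) (hJ : J = Set.Ioo p q) (hne : J.Nonempty) (hsub : J ⊆ Set.Ioi 0)
    (u Prr Ptt : ℝ → ℝ)
    (hu : ContDiffOn ℝ (⊤ : ℕ∞) u J) (hPrr : ContDiffOn ℝ (⊤ : ℕ∞) Prr J) (hPtt : ContDiffOn ℝ (⊤ : ℕ∞) Ptt J)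
    (T : ℝ → ℝ) (hT : T = fun s => deriv Ptt s + (Ptt s - Prr s) / s)
    (hE1 : ∀ r ∈ J, (2 * μe + lame) * deriv (fun s => deriv u s - Prr s) r
        + lame * deriv (fun s => u s / s - Ptt s) r
        = -(2 * μe) * deriv (fun s => u s / s - Ptt s) r - 2 * μe * T r)
    (hE2 : ∀ r ∈ J, (2 * μe + lame) * (deriv u r - Prr r) + lame * (u r / r - Ptt r)
        = 2 * μm * Prr r + lamm * (Prr r + Ptt r) - (m / r) * T r)
    (hE3 : ∀ r ∈ J, (2 * μe + lame) * (u r / r - Ptt r) + lame * (deriv u r - Prr r)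
        = 2 * μm * Ptt r + lamm * (Prr r + Ptt r) - m * deriv T r) :
    ∀ r ∈ J, 2 * μm * (deriv Prr r - (Ptt r - Prr r) / r)
      + (κm - μm) * deriv (fun s => Prr s + Ptt s) r = 0 := by
  intro r hr
  have hJo : IsOpen J := hJ ▸ isOpen_Ioo
  have hrnhds : J ∈ nhds r := hJo.mem_nhds hr
  have hr0 : (0:ℝ) < r := hsub hr
  have hrne : r ≠ 0 := ne_of_gt hr0
  have hdu : DifferentiableAt ℝ u r :=
    ((hu.differentiableOn (by simp)).differentiableAt hrnhds)
  have hdPrr : DifferentiableAt ℝ Prr r :=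
    ((hPrr.differentiableOn (by simp)).differentiableAt hrnhds)
  have hdPtt : DifferentiableAt ℝ Ptt r :=
    ((hPtt.differentiableOn (by simp)).differentiableAt hrnhds)
  have hdu' : DifferentiableAt ℝ (deriv u) r :=
    (((hu.deriv_of_isOpen hJo (by exact WithTop.coe_le_coe.mpr le_top) : ContDiffOn ℝ 1 (deriv u) J).differentiableOn
      one_ne_zero).differentiableAt hrnhds)
  have hdPtt' : DifferentiableAt ℝ (deriv Ptt) r :=
    (((hPtt.deriv_of_isOpen hJo (by exact WithTop.coe_le_coe.mpr le_top) : ContDiffOn ℝ 1 (deriv Ptt) J).differentiableOn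
      one_ne_zero).differentiableAt hrnhds)
  have HU : HasDerivAt u (deriv u r) r := hdu.hasDerivAt
  have HR : HasDerivAt Prr (deriv Prr r) r := hdPrr.hasDerivAt
  have HP : HasDerivAt Ptt (deriv Ptt r) r := hdPtt.hasDerivAt
  have HU2 : HasDerivAt (deriv u) (deriv (deriv u) r) r := hdu'.hasDerivAt
  have HA : HasDerivAt (fun s => deriv u s - Prr s) (deriv (deriv u) r - deriv Prr r) r :=
    HU2.sub HR
  have Hq : HasDerivAt (fun s => u s / s) ((deriv u r * r - u r * 1) / r ^ 2) r :=
    HU.div (hasDerivAt_id r) hrne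
  have HB : HasDerivAt (fun s => u s / s - Ptt s)
      ((deriv u r * r - u r * 1) / r ^ 2 - deriv Ptt r) r := Hq.sub HP
  have HTd : DifferentiableAt ℝ T r := by
    rw [hT]
    exact hdPtt'.add ((hdPtt.sub hdPrr).div differentiableAt_id hrne)
  have HT : HasDerivAt T (deriv T r) r := HTd.hasDerivAt
  have Hmr : HasDerivAt (fun s : ℝ => m / s) (m * -(r ^ 2)⁻¹) r := by
    simpa [div_eq_mul_inv] using (hasDerivAt_inv hrne).const_mul m
  have HG : HasDerivAt (fun s => 2 * μm * Prr s + lamm * (Prr s + Ptt s) - m / s * T s)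
      (2 * μm * deriv Prr r + lamm * (deriv Prr r + deriv Ptt r)
        - (m * -(r ^ 2)⁻¹ * T r + m / r * deriv T r)) r :=
    ((HR.const_mul (2 * μm)).add ((HR.add HP).const_mul lamm)).sub (Hmr.mul HT)
  have HF : HasDerivAt
      (fun s => (2 * μe + lame) * (deriv u s - Prr s) + lame * (u s / s - Ptt s))
      ((2 * μe + lame) * (deriv (deriv u) r - deriv Prr r)
        + lame * ((deriv u r * r - u r * 1) / r ^ 2 - deriv Ptt r)) r :=
    (HA.const_mul _).add (HB.const_mul _)
  have hFG : (fun s => (2 * μe + lame) * (deriv u s - Prr s) + lame * (u s / s - Ptt s))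
      =ᶠ[nhds r] (fun s => 2 * μm * Prr s + lamm * (Prr s + Ptt s) - m / s * T s) :=
    Filter.eventuallyEq_of_mem hrnhds (fun s hs => hE2 s hs)
  have hder := hFG.deriv_eq
  rw [HF.deriv, HG.deriv] at hder
  have e1 := hE1 r hr
  rw [HA.deriv, HB.deriv] at e1
  have k1 := hder.symm.trans e1
  have e2 := hE2 r hr
  have e3 := hE3 r hr
  have hTval : T r = deriv Ptt r + (Ptt r - Prr r) / r := by rw [hT]
  rw [(show HasDerivAt (fun s => Prr s + Ptt s) (deriv Prr r + deriv Ptt r) r from HR.add HP).deriv]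
  subst hlamm
  field_simp at k1 e2 e3 hTval ⊢
  have h4 : r ^ 4 * (2 * μm * (deriv Prr r * r - (Ptt r - Prr r))
      + (κm - μm) * (deriv Prr r + deriv Ptt r) * r) = 0 := by
    linear_combination r ^ 3 * k1 - r ^ 3 * e2 + r ^ 3 * e3 - 2 * μe * r ^ 4 * hTval
  exact ((mul_eq_zero.mp h4).resolve_left (pow_ne_zero 4 hrne)).trans (mul_zero r).symm
end

section
/- Let u, P_rr, P_θθ : J → ℝ be smooth functions on a nonempty open interval J ⊆ (0, ∞) satisfying the axisymmetric relaxed micromorphic equilibrium system (E1), (E2), (E3). Then there exists a constant C₁ ∈ ℝ such that for every r ∈ J: u'(r) + u(r)/r = ((μ_m·κ_e − μ_e·κ_m)/(μ_m·(κ_e + μ_e)))·(P_rr(r) + P_θθ(r)) + C₁. -/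
/-- From the axisymmetric relaxed micromorphic equilibrium system (E1)-(E3), there is a
constant `C₁` with `u' + u/r = ((μ_m κ_e − μ_e κ_m)/(μ_m (κ_e + μ_e)))(P_rr + P_θθ) + C₁` on J. -/
theorem stmt3
    (μe μm κe κm m : ℝ) (hμe : 0 < μe) (hμm : 0 < μm) (hκe : 0 < κe) (hκm : 0 < κm)
    (hm : 0 < m) (lame lamm : ℝ) (hlame : lame = κe - μe) (hlamm : lamm = κm - μm)
    (J : Set ℝ) (p q : ℝ) (hJ : J = Set.Ioo p q) (hne : J.Nonempty) (hsub : J ⊆ Set.Ioi 0)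
    (u Prr Ptt : ℝ → ℝ)
    (hu : ContDiffOn ℝ (⊤ : ℕ∞) u J) (hPrr : ContDiffOn ℝ (⊤ : ℕ∞) Prr J) (hPtt : ContDiffOn ℝ (⊤ : ℕ∞) Ptt J)
    (T : ℝ → ℝ) (hT : T = fun s => deriv Ptt s + (Ptt s - Prr s) / s)
    (hE1 : ∀ r ∈ J, (2 * μe + lame) * deriv (fun s => deriv u s - Prr s) r
        + lame * deriv (fun s => u s / s - Ptt s) r
        = -(2 * μe) * deriv (fun s => u s / s - Ptt s) r - 2 * μe * T r)
    (hE2 : ∀ r ∈ J, (2 * μe + lame) * (deriv u r - Prr r) + lame * (u r / r - Ptt r)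
        = 2 * μm * Prr r + lamm * (Prr r + Ptt r) - (m / r) * T r)
    (hE3 : ∀ r ∈ J, (2 * μe + lame) * (u r / r - Ptt r) + lame * (deriv u r - Prr r)
        = 2 * μm * Ptt r + lamm * (Prr r + Ptt r) - m * deriv T r) :
    ∃ C₁ : ℝ, ∀ r ∈ J, deriv u r + u r / r
      = ((μm * κe - μe * κm) / (μm * (κe + μe))) * (Prr r + Ptt r) + C₁ := by
  subst hlame hlamm hT hJ
  have hopen : IsOpen (Set.Ioo p q) := isOpen_Ioo
  have hu1 : ContDiffOn ℝ (⊤ : ℕ∞) (deriv u) (Set.Ioo p q) := hu.deriv_of_isOpen hopen (by simp)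
  have hPtt1 : ContDiffOn ℝ (⊤ : ℕ∞) (deriv Ptt) (Set.Ioo p q) := hPtt.deriv_of_isOpen hopen (by simp)
  have hdiffAt : ∀ (f : ℝ → ℝ), ContDiffOn ℝ (⊤ : ℕ∞) f (Set.Ioo p q) → ∀ r ∈ Set.Ioo p q,
      DifferentiableAt ℝ f r := fun f hf r hr =>
    (hf.differentiableOn (by simp)).differentiableAt (hopen.mem_nhds hr)
  set c : ℝ := (μm * κe - μe * κm) / (μm * (κe + μe)) with hc
  set g : ℝ → ℝ := fun s => deriv u s + u s / s - c * (Prr s + Ptt s) with hg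
  have hμm0 : μm ≠ 0 := ne_of_gt hμm
  have hke0 : κe + μe ≠ 0 := ne_of_gt (by linarith)
  have key : ∀ r ∈ Set.Ioo p q, HasDerivAt g 0 r := by
    intro r hr
    have hr0 : r ≠ 0 := ne_of_gt (hsub hr)
    have du := hdiffAt u hu r hr
    have dPrr := hdiffAt Prr hPrr r hr
    have dPtt := hdiffAt Ptt hPtt r hr
    have ddu := hdiffAt _ hu1 r hr
    have ddPtt := hdiffAt _ hPtt1 r hr
    -- derivative of u s / s
    have hus : HasDerivAt (fun s => u s / s) (deriv u r / r - u r / r ^ 2) r := by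
      have h := du.hasDerivAt.fun_div (hasDerivAt_id' r) hr0
      refine h.congr_deriv ?_
      field_simp
    -- derivative of m / s
    have hms : HasDerivAt (fun s => m / s) (-(m / r ^ 2)) r := by
      have h := (hasDerivAt_const r m).fun_div (hasDerivAt_id' r) hr0
      refine h.congr_deriv ?_
      field_simp
      ring
    -- T is differentiable at r
    have dT : DifferentiableAt ℝ (fun s => deriv Ptt s + (Ptt s - Prr s) / s) r :=
      ddPtt.add ((dPtt.sub dPrr).div differentiableAt_id hr0)
    have hTd : HasDerivAt (fun s => deriv Ptt s + (Ptt s - Prr s) / s)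
        (deriv (fun s => deriv Ptt s + (Ptt s - Prr s) / s) r) r := dT.hasDerivAt
    -- rewrite E1 derivatives
    have hD1 : deriv (fun s => deriv u s - Prr s) r = deriv (deriv u) r - deriv Prr r :=
      (ddu.hasDerivAt.sub dPrr.hasDerivAt).deriv
    have hD2 : deriv (fun s => u s / s - Ptt s) r
        = deriv u r / r - u r / r ^ 2 - deriv Ptt r := (hus.sub dPtt.hasDerivAt).deriv
    have HE1 := hE1 r hr
    rw [hD1, hD2] at HE1
    simp only [] at HE1
    have HE2 := hE2 r hr
    simp only [] at HE2
    have HE3 := hE3 r hr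
    -- derivative of both sides of E2
    have hL2 : HasDerivAt
        (fun s => (2 * μe + (κe - μe)) * (deriv u s - Prr s)
          + (κe - μe) * (u s / s - Ptt s))
        ((2 * μe + (κe - μe)) * (deriv (deriv u) r - deriv Prr r)
          + (κe - μe) * (deriv u r / r - u r / r ^ 2 - deriv Ptt r)) r :=
      ((ddu.hasDerivAt.sub dPrr.hasDerivAt).const_mul _).add
        ((hus.sub dPtt.hasDerivAt).const_mul _)
    have hR2 : HasDerivAt
        (fun s => 2 * μm * Prr s + (κm - μm) * (Prr s + Ptt s)
          - m / s * (deriv Ptt s + (Ptt s - Prr s) / s))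
        (2 * μm * deriv Prr r + (κm - μm) * (deriv Prr r + deriv Ptt r)
          - (-(m / r ^ 2) * (deriv Ptt r + (Ptt r - Prr r) / r)
            + m / r * deriv (fun s => deriv Ptt s + (Ptt s - Prr s) / s) r)) r :=
      ((dPrr.hasDerivAt.const_mul _).add
        ((dPrr.hasDerivAt.add dPtt.hasDerivAt).const_mul _)).sub (hms.mul hTd)
    have hEE : (fun s => (2 * μe + (κe - μe)) * (deriv u s - Prr s)
          + (κe - μe) * (u s / s - Ptt s))
        =ᶠ[nhds r] (fun s => 2 * μm * Prr s + (κm - μm) * (Prr s + Ptt s)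
          - m / s * (deriv Ptt s + (Ptt s - Prr s) / s)) :=
      Filter.eventuallyEq_of_mem (hopen.mem_nhds hr) (fun s hs => hE2 s hs)
    have HdE2 := hEE.deriv_eq
    rw [hL2.deriv, hR2.deriv] at HdE2
    -- derivative of g
    have hgd : HasDerivAt g
        (deriv (deriv u) r + (deriv u r / r - u r / r ^ 2)
          - c * (deriv Prr r + deriv Ptt r)) r :=
      (ddu.hasDerivAt.add hus).sub
        ((dPrr.hasDerivAt.add dPtt.hasDerivAt).const_mul c)
    have hzero : deriv (deriv u) r + (deriv u r / r - u r / r ^ 2)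
        - c * (deriv Prr r + deriv Ptt r) = 0 := by
      have hmult : μm * (κe + μe) * (deriv (deriv u) r + (deriv u r / r - u r / r ^ 2))
          = (μm * κe - μe * κm) * (deriv Prr r + deriv Ptt r) := by
        linear_combination (μm + μe) * HE1 - μe * HdE2 - (μe / r) * HE2 + (μe / r) * HE3
      rw [sub_eq_zero, hc, div_mul_eq_mul_div,
        eq_div_iff (mul_ne_zero hμm0 hke0)]
      linear_combination hmult
    rw [hzero] at hgd
    exact hgd
  -- g is constant on the interval
  obtain ⟨r₀, hr₀⟩ := hne
  refine ⟨g r₀ - 0, fun r hr => ?_⟩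
  have hconst : g r = g r₀ := by
    apply (convex_Ioo p q).is_const_of_fderivWithin_eq_zero
      (fun x hx => ((key x hx).differentiableAt).differentiableWithinAt)
      (fun x hx => ?_) hr hr₀
    have h := ((key x hx).hasFDerivAt).hasFDerivWithinAt (s := Set.Ioo p q)
    rw [h.fderivWithin (hopen.uniqueDiffWithinAt hx)]
    ext y
    simp
  have := hconst
  simp only [hg] at this
  linarith [this]
end

section
/- Let u, P_rr, P_θθ : J → ℝ be smooth functions on a nonempty open interval J ⊆ (0, ∞) satisfying the axisymmetric relaxed micromorphic equilibrium system (E1), (E2), (E3). Then there exists a constant C₁ ∈ ℝ such that for every r ∈ J: (u'(r) − P_rr(r)) + (u(r)/r − P_θθ(r)) = −(μ_e·(κ_m + μ_m)/(μ_m·(κ_e + μ_e)))·(P_rr(r) + P_θθ(r)) + C₁; moreover the same constant C₁ satisfies u'(r) + u(r)/r = ((μ_m·κ_e − μ_e·κ_m)/(μ_m·(κ_e + μ_e)))·(P_rr(r) + P_θθ(r)) + C₁ for every r ∈ J. -/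
/-- From the axisymmetric relaxed micromorphic equilibrium system (E1)-(E3), there is a
single constant `C₁` with `(u' − P_rr) + (u/r − P_θθ) = −(μ_e(κ_m+μ_m)/(μ_m(κ_e+μ_e)))(P_rr+P_θθ) + C₁`
and `u' + u/r = ((μ_m κ_e − μ_e κ_m)/(μ_m(κ_e+μ_e)))(P_rr+P_θθ) + C₁` on J. -/
theorem stmt4
    (μe μm κe κm m : ℝ) (hμe : 0 < μe) (hμm : 0 < μm) (hκe : 0 < κe) (hκm : 0 < κm)
    (hm : 0 < m) (lame lamm : ℝ) (hlame : lame = κe - μe) (hlamm : lamm = κm - μm)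
    (J : Set ℝ) (p q : ℝ) (hJ : J = Set.Ioo p q) (hne : J.Nonempty) (hsub : J ⊆ Set.Ioi 0)
    (u Prr Ptt : ℝ → ℝ)
    (hu : ContDiffOn ℝ (⊤ : ℕ∞) u J) (hPrr : ContDiffOn ℝ (⊤ : ℕ∞) Prr J) (hPtt : ContDiffOn ℝ (⊤ : ℕ∞) Ptt J)
    (T : ℝ → ℝ) (hT : T = fun s => deriv Ptt s + (Ptt s - Prr s) / s)
    (hE1 : ∀ r ∈ J, (2 * μe + lame) * deriv (fun s => deriv u s - Prr s) r
        + lame * deriv (fun s => u s / s - Ptt s) r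
        = -(2 * μe) * deriv (fun s => u s / s - Ptt s) r - 2 * μe * T r)
    (hE2 : ∀ r ∈ J, (2 * μe + lame) * (deriv u r - Prr r) + lame * (u r / r - Ptt r)
        = 2 * μm * Prr r + lamm * (Prr r + Ptt r) - (m / r) * T r)
    (hE3 : ∀ r ∈ J, (2 * μe + lame) * (u r / r - Ptt r) + lame * (deriv u r - Prr r)
        = 2 * μm * Ptt r + lamm * (Prr r + Ptt r) - m * deriv T r) :
    ∃ C₁ : ℝ,
      (∀ r ∈ J, (deriv u r - Prr r) + (u r / r - Ptt r)
        = -(μe * (κm + μm) / (μm * (κe + μe))) * (Prr r + Ptt r) + C₁) ∧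
      (∀ r ∈ J, deriv u r + u r / r
        = ((μm * κe - μe * κm) / (μm * (κe + μe))) * (Prr r + Ptt r) + C₁) := by
  subst hJ
  have hJo : IsOpen (Set.Ioo p q) := isOpen_Ioo
  set α := μe * (κm + μm) / (μm * (κe + μe)) with hα
  set F := fun s : ℝ => (deriv u s - Prr s) + (u s / s - Ptt s) + α * (Prr s + Ptt s) with hF
  have hu1 : ContDiffOn ℝ (⊤ : ℕ∞) (deriv u) (Set.Ioo p q) := hu.deriv_of_isOpen hJo (by simp)
  have hPrr1 : ContDiffOn ℝ (⊤ : ℕ∞) (deriv Prr) (Set.Ioo p q) := hPrr.deriv_of_isOpen hJo (by simp)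
  have hPtt1 : ContDiffOn ℝ (⊤ : ℕ∞) (deriv Ptt) (Set.Ioo p q) := hPtt.deriv_of_isOpen hJo (by simp)
  have hF0 : ∀ r ∈ Set.Ioo p q, HasDerivAt F 0 r := by
    intro r hr
    have hrm : Set.Ioo p q ∈ nhds r := hJo.mem_nhds hr
    have hr0 : r ≠ 0 := ne_of_gt (hsub hr)
    have du : DifferentiableAt ℝ u r := (hu.differentiableOn (by simp)).differentiableAt hrm
    have du1 : DifferentiableAt ℝ (deriv u) r :=
      (hu1.differentiableOn (by simp)).differentiableAt hrm
    have dPrr : DifferentiableAt ℝ Prr r := (hPrr.differentiableOn (by simp)).differentiableAt hrm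
    have dPtt : DifferentiableAt ℝ Ptt r := (hPtt.differentiableOn (by simp)).differentiableAt hrm
    have dPtt1 : DifferentiableAt ℝ (deriv Ptt) r :=
      (hPtt1.differentiableOn (by simp)).differentiableAt hrm
    have hdu : HasDerivAt u (deriv u r) r := du.hasDerivAt
    have hdu2 : HasDerivAt (deriv u) (deriv (deriv u) r) r := du1.hasDerivAt
    have hdPrr : HasDerivAt Prr (deriv Prr r) r := dPrr.hasDerivAt
    have hdPtt : HasDerivAt Ptt (deriv Ptt r) r := dPtt.hasDerivAt
    have hTdiff : DifferentiableAt ℝ T r := by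
      rw [hT]
      exact dPtt1.add ((dPtt.sub dPrr).div differentiableAt_id hr0)
    have hdT : HasDerivAt T (deriv T r) r := hTdiff.hasDerivAt
    have hTr : T r = deriv Ptt r + (Ptt r - Prr r) / r := by rw [hT]
    have hA : HasDerivAt (fun s => deriv u s - Prr s)
        (deriv (deriv u) r - deriv Prr r) r := hdu2.sub hdPrr
    have huov : HasDerivAt (fun s => u s / s)
        ((deriv u r * r - u r * 1) / r ^ 2) r := hdu.div (hasDerivAt_id r) hr0
    have hB : HasDerivAt (fun s => u s / s - Ptt s)
        ((deriv u r * r - u r * 1) / r ^ 2 - deriv Ptt r) r := huov.sub hdPtt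
    have e1 := hE1 r hr
    rw [hA.deriv, hB.deriv] at e1
    have hmr : HasDerivAt (fun s => m / s) ((0 * r - m * 1) / r ^ 2) r :=
      (hasDerivAt_const r m).div (hasDerivAt_id r) hr0
    have hRm : HasDerivAt (fun s => (m / s) * T s)
        ((0 * r - m * 1) / r ^ 2 * T r + (m / r) * deriv T r) r := hmr.mul hdT
    have hL : HasDerivAt
        (fun s => (2 * μe + lame) * (deriv u s - Prr s) + lame * (u s / s - Ptt s))
        ((2 * μe + lame) * (deriv (deriv u) r - deriv Prr r)
          + lame * ((deriv u r * r - u r * 1) / r ^ 2 - deriv Ptt r)) r :=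
      (hA.const_mul _).add (hB.const_mul _)
    have hR : HasDerivAt
        (fun s => 2 * μm * Prr s + lamm * (Prr s + Ptt s) - (m / s) * T s)
        (2 * μm * deriv Prr r + lamm * (deriv Prr r + deriv Ptt r)
          - ((0 * r - m * 1) / r ^ 2 * T r + (m / r) * deriv T r)) r :=
      ((hdPrr.const_mul _).add ((hdPrr.add hdPtt).const_mul _)).sub hRm
    have hev : (fun s => (2 * μe + lame) * (deriv u s - Prr s) + lame * (u s / s - Ptt s))
        =ᶠ[nhds r] (fun s => 2 * μm * Prr s + lamm * (Prr s + Ptt s) - (m / s) * T s) :=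
      Filter.eventuallyEq_of_mem hrm (fun s hs => hE2 s hs)
    have e2' := hev.deriv_eq
    rw [hL.deriv, hR.deriv] at e2'
    have e2 := hE2 r hr
    have e3 := hE3 r hr
    rw [hlame] at e1 e2 e2' e3
    rw [hlamm] at e2 e2' e3
    rw [hTr] at e1 e2 e2'
    field_simp at e1 e2 e2' e3
    -- key identity: (κm+μm) * S' * r = 2 μm * (T r * r)
    have key5 : ((κm + μm) * (deriv Prr r + deriv Ptt r) * r) * r ^ 5
        = (2 * μm * (deriv Ptt r * r + (Ptt r - Prr r))) * r ^ 5 := by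
      linear_combination r ^ 4 * e1 - r ^ 3 * e2' + r ^ 4 * e3 - r ^ 3 * e2
    have keyc : (κm + μm) * (deriv Prr r + deriv Ptt r) * r
        = 2 * μm * (deriv Ptt r * r + (Ptt r - Prr r)) :=
      mul_right_cancel₀ (pow_ne_zero 5 hr0) key5
    -- reduce e1 to minimal cleared form
    have e1c : (2 * μe + (κe - μe)) * (deriv (deriv u) r - deriv Prr r) * r ^ 2
          + (κe - μe) * (deriv u r * r - u r - deriv Ptt r * r ^ 2)
        = -(2 * μe) * (deriv u r * r - u r - deriv Ptt r * r ^ 2)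
          - 2 * μe * (deriv Ptt r * r ^ 2 + (Ptt r - Prr r) * r) := by
      apply mul_right_cancel₀ (pow_ne_zero 3 hr0)
      linear_combination r ^ 3 * e1
    have hFd : HasDerivAt F
        ((deriv (deriv u) r - deriv Prr r)
          + ((deriv u r * r - u r * 1) / r ^ 2 - deriv Ptt r)
          + α * (deriv Prr r + deriv Ptt r)) r :=
      (hA.add hB).add ((hdPrr.add hdPtt).const_mul α)
    have hz : (deriv (deriv u) r - deriv Prr r)
          + ((deriv u r * r - u r * 1) / r ^ 2 - deriv Ptt r)
          + α * (deriv Prr r + deriv Ptt r) = 0 := by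
      rw [hα]
      have h1 : κe + μe ≠ 0 := by positivity
      have h3 : μm ≠ 0 := ne_of_gt hμm
      field_simp
      linear_combination μm * e1c + μe * r * keyc
    exact hz ▸ hFd
  have hFdiff : DifferentiableOn ℝ F (Set.Ioo p q) := fun x hx =>
    ((hF0 x hx).differentiableAt).differentiableWithinAt
  have hfz : ∀ x ∈ Set.Ioo p q, fderivWithin ℝ F (Set.Ioo p q) x = 0 := by
    intro x hx
    have h1 : HasFDerivAt F (0 : ℝ →L[ℝ] ℝ) x := by
      have h2 := hasDerivAt_iff_hasFDerivAt.mp (hF0 x hx)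
      simpa using h2
    rw [fderivWithin_of_isOpen hJo hx]
    exact h1.fderiv
  obtain ⟨r0, hr0J⟩ := hne
  have hconst : ∀ r ∈ Set.Ioo p q, F r = F r0 := fun r hr =>
    (convex_Ioo p q).is_const_of_fderivWithin_eq_zero hFdiff hfz hr hr0J
  refine ⟨F r0, ?_, ?_⟩
  · intro r hr
    have h := hconst r hr
    simp only [hF] at h
    linarith [h]
  · intro r hr
    have h := hconst r hr
    simp only [hF] at h
    have hβ : 1 - α = (μm * κe - μe * κm) / (μm * (κe + μe)) := by
      rw [hα]
      have h1 : κe + μe ≠ 0 := by positivity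
      have h3 : μm ≠ 0 := ne_of_gt hμm
      field_simp
      ring
    linear_combination h + (Prr r + Ptt r) * hβ
end

section
/- Let u, P_rr, P_θθ : J → ℝ be smooth functions on a nonempty open interval J ⊆ (0, ∞) satisfying the axisymmetric relaxed micromorphic equilibrium system (E1), (E2), (E3), and let C₁ ∈ ℝ be a constant such that u'(r) + u(r)/r = ((μ_m·κ_e − μ_e·κ_m)/(μ_m·(κ_e + μ_e)))·(P_rr(r) + P_θθ(r)) + C₁ on J. Then the function Z := P_rr + P_θθ satisfies the non-homogeneous modified Bessel equation Z''(r) + Z'(r)/r − a·Z(r) + b = 0 for every r ∈ J, where a = (4/m)·(μ_e·κ_e/(κ_e + μ_e) + μ_m·κ_m/(κ_m + μ_m)) and b = (4/m)·C₁·κ_e·μ_m/(κ_m + μ_m). -/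
/-- Given the equilibrium system (E1)-(E3) and the first integral with constant `C₁`,
`Z := P_rr + P_θθ` satisfies the non-homogeneous modified Bessel equation
`Z'' + Z'/r − a Z + b = 0` on J. -/
theorem stmt5
    (μe μm κe κm m : ℝ) (hμe : 0 < μe) (hμm : 0 < μm) (hκe : 0 < κe) (hκm : 0 < κm)
    (hm : 0 < m) (lame lamm : ℝ) (hlame : lame = κe - μe) (hlamm : lamm = κm - μm)
    (J : Set ℝ) (p q : ℝ) (hJ : J = Set.Ioo p q) (hne : J.Nonempty) (hsub : J ⊆ Set.Ioi 0)
    (u Prr Ptt : ℝ → ℝ)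
    (hu : ContDiffOn ℝ (⊤ : ℕ∞) u J) (hPrr : ContDiffOn ℝ (⊤ : ℕ∞) Prr J) (hPtt : ContDiffOn ℝ (⊤ : ℕ∞) Ptt J)
    (T : ℝ → ℝ) (hT : T = fun s => deriv Ptt s + (Ptt s - Prr s) / s)
    (hE1 : ∀ r ∈ J, (2 * μe + lame) * deriv (fun s => deriv u s - Prr s) r
        + lame * deriv (fun s => u s / s - Ptt s) r
        = -(2 * μe) * deriv (fun s => u s / s - Ptt s) r - 2 * μe * T r)
    (hE2 : ∀ r ∈ J, (2 * μe + lame) * (deriv u r - Prr r) + lame * (u r / r - Ptt r)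
        = 2 * μm * Prr r + lamm * (Prr r + Ptt r) - (m / r) * T r)
    (hE3 : ∀ r ∈ J, (2 * μe + lame) * (u r / r - Ptt r) + lame * (deriv u r - Prr r)
        = 2 * μm * Ptt r + lamm * (Prr r + Ptt r) - m * deriv T r)
    (C₁ : ℝ)
    (hC1 : ∀ r ∈ J, deriv u r + u r / r
      = ((μm * κe - μe * κm) / (μm * (κe + μe))) * (Prr r + Ptt r) + C₁)
    (a b : ℝ)
    (ha : a = (4 / m) * (μe * κe / (κe + μe) + μm * κm / (κm + μm)))
    (hb : b = (4 / m) * (C₁ * κe * μm / (κm + μm))) :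
    ∀ r ∈ J, deriv (deriv (fun s => Prr s + Ptt s)) r
      + deriv (fun s => Prr s + Ptt s) r / r - a * (Prr r + Ptt r) + b = 0 := by
  subst hJ hlame hlamm ha hb
  have hJo : IsOpen (Set.Ioo p q) := isOpen_Ioo
  have hu1 : ContDiffOn ℝ (⊤ : ℕ∞) (deriv u) (Set.Ioo p q) := hu.deriv_of_isOpen hJo (by simp)
  have hPrr1 : ContDiffOn ℝ (⊤ : ℕ∞) (deriv Prr) (Set.Ioo p q) := hPrr.deriv_of_isOpen hJo (by simp)
  have hPtt1 : ContDiffOn ℝ (⊤ : ℕ∞) (deriv Ptt) (Set.Ioo p q) := hPtt.deriv_of_isOpen hJo (by simp)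
  have dat : ∀ (f : ℝ → ℝ), ContDiffOn ℝ (⊤ : ℕ∞) f (Set.Ioo p q) →
      ∀ s ∈ Set.Ioo p q, DifferentiableAt ℝ f s :=
    fun f hf s hs => (hf.contDiffAt (hJo.mem_nhds hs)).differentiableAt (by simp)
  -- Step 1: the key relation  2 μm T = (μm + κm) Z'
  have hTc : ∀ s ∈ Set.Ioo p q, 2 * μm * T s = (μm + κm) * (deriv Prr s + deriv Ptt s) := by
    intro s hs
    have hs0 : (0:ℝ) < s := hsub hs
    have hsne : s ≠ 0 := hs0.ne'
    have dU := (dat u hu s hs).hasDerivAt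
    have dU1 := (dat _ hu1 s hs).hasDerivAt
    have dR := (dat _ hPrr s hs).hasDerivAt
    have dΘ := (dat _ hPtt s hs).hasDerivAt
    have dΘ1 := (dat _ hPtt1 s hs).hasDerivAt
    have hUdiv : HasDerivAt (fun t => u t / t) ((deriv u s * s - u s * 1) / s ^ 2) s :=
      dU.div (hasDerivAt_id' s) hsne
    have hTd : HasDerivAt T (deriv (deriv Ptt) s
        + ((deriv Ptt s - deriv Prr s) * s - (Ptt s - Prr s) * 1) / s ^ 2) s := by
      rw [hT]
      exact dΘ1.add (((dΘ.sub dR)).div (hasDerivAt_id' s) hsne)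
    have hDT : deriv T s = deriv (deriv Ptt) s
        + ((deriv Ptt s - deriv Prr s) * s - (Ptt s - Prr s) * 1) / s ^ 2 := hTd.deriv
    have hTs : T s = deriv Ptt s + (Ptt s - Prr s) / s := by rw [hT]
    have key1 : deriv (fun t => deriv u t - Prr t) s = deriv (deriv u) s - deriv Prr s :=
      (dU1.sub dR).deriv
    have key2 : deriv (fun t => u t / t - Ptt t) s
        = (deriv u s * s - u s * 1) / s ^ 2 - deriv Ptt s := (hUdiv.sub dΘ).deriv
    have hA := hE1 s hs
    rw [key1, key2] at hA
    have hB := hE2 s hs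
    have hC3 := hE3 s hs
    have hFd : HasDerivAt
        (fun t => (2 * μe + (κe - μe)) * (deriv u t - Prr t) + (κe - μe) * (u t / t - Ptt t))
        ((2 * μe + (κe - μe)) * (deriv (deriv u) s - deriv Prr s)
          + (κe - μe) * ((deriv u s * s - u s * 1) / s ^ 2 - deriv Ptt s)) s :=
      ((dU1.sub dR).const_mul _).add ((hUdiv.sub dΘ).const_mul _)
    have hGd : HasDerivAt
        (fun t => 2 * μm * Prr t + (κm - μm) * (Prr t + Ptt t) - (m / t) * T t)
        (2 * μm * deriv Prr s + (κm - μm) * (deriv Prr s + deriv Ptt s)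
          - ((0 * s - m * 1) / s ^ 2 * T s + (m / s) * (deriv (deriv Ptt) s
            + ((deriv Ptt s - deriv Prr s) * s - (Ptt s - Prr s) * 1) / s ^ 2))) s :=
      ((dR.const_mul _).add ((dR.add dΘ).const_mul _)).sub
        (((hasDerivAt_const s m).div (hasDerivAt_id' s) hsne).mul hTd)
    have hD : (2 * μe + (κe - μe)) * (deriv (deriv u) s - deriv Prr s)
          + (κe - μe) * ((deriv u s * s - u s * 1) / s ^ 2 - deriv Ptt s)
        = 2 * μm * deriv Prr s + (κm - μm) * (deriv Prr s + deriv Ptt s)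
          - ((0 * s - m * 1) / s ^ 2 * T s + (m / s) * (deriv (deriv Ptt) s
            + ((deriv Ptt s - deriv Prr s) * s - (Ptt s - Prr s) * 1) / s ^ 2)) := by
      have heq : deriv (fun t => (2 * μe + (κe - μe)) * (deriv u t - Prr t)
            + (κe - μe) * (u t / t - Ptt t)) s
          = deriv (fun t => 2 * μm * Prr t + (κm - μm) * (Prr t + Ptt t) - (m / t) * T t) s :=
        Filter.EventuallyEq.deriv_eq
          (Filter.eventuallyEq_of_mem (hJo.mem_nhds hs) fun t ht => hE2 t ht)
      rw [hFd.deriv, hGd.deriv] at heq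
      exact heq
    rw [hTs] at hA hB hD ⊢
    rw [hDT] at hC3
    linear_combination hD - hA + (1/s) * (hB - hC3) + (2 * μe * deriv u s / s) * (mul_inv_cancel₀ hsne)
  intro r hr
  have hr0 : (0:ℝ) < r := hsub hr
  have hrne : r ≠ 0 := hr0.ne'
  have dR := (dat _ hPrr r hr).hasDerivAt
  have dΘ := (dat _ hPtt r hr).hasDerivAt
  have dR1 := (dat _ hPrr1 r hr).hasDerivAt
  have dΘ1 := (dat _ hPtt1 r hr).hasDerivAt
  have hZ1 : deriv (fun s => Prr s + Ptt s) r = deriv Prr r + deriv Ptt r := (dR.add dΘ).deriv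
  have hZev : deriv (fun s => Prr s + Ptt s) =ᶠ[nhds r] fun s => deriv Prr s + deriv Ptt s := by
    filter_upwards [hJo.mem_nhds hr] with t ht
    exact ((dat _ hPrr t ht).hasDerivAt.add (dat _ hPtt t ht).hasDerivAt).deriv
  have hZ2 : deriv (deriv (fun s => Prr s + Ptt s)) r
      = deriv (deriv Prr) r + deriv (deriv Ptt) r := by
    rw [hZev.deriv_eq]; exact (dR1.add dΘ1).deriv
  have hTev : T =ᶠ[nhds r] fun s => (μm + κm) * (deriv Prr s + deriv Ptt s) / (2 * μm) := by
    filter_upwards [hJo.mem_nhds hr] with t ht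
    have h := hTc t ht
    field_simp
    linear_combination h
  have hT1 : deriv T r = (μm + κm) * (deriv (deriv Prr) r + deriv (deriv Ptt) r) / (2 * μm) := by
    rw [hTev.deriv_eq]
    exact (((dR1.add dΘ1).const_mul (μm + κm)).div_const (2 * μm)).deriv
  have hTr2 : T r = (μm + κm) * (deriv Prr r + deriv Ptt r) / (2 * μm) := by
    have h := hTc r hr
    field_simp
    linear_combination h
  have hB := hE2 r hr
  have hC3 := hE3 r hr
  have hCc := hC1 r hr
  rw [hZ1, hZ2]
  rw [hTr2] at hB
  rw [hT1] at hC3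
  field_simp at hB hC3 hCc ⊢
  have key : ((((deriv (deriv Prr) r + deriv (deriv Ptt) r) * r + (deriv Prr r + deriv Ptt r))
          * (m * ((κe + μe) * (κm + μm)))
        - r * (4 * (μe * κe * (κm + μm) + μm * κm * (κe + μe)) * (Prr r + Ptt r)))
          * (m * (κm + μm))
      + 4 * (C₁ * κe * μm) * (r * (m * ((κe + μe) * (κm + μm))))) * r = 0 := by
    linear_combination (m * (κm + μm) * r) * ((κe + μe) * hB + (κe + μe) * hC3
      - 4 * κe * hCc)
  rcases mul_eq_zero.mp key with h | h
  · linear_combination (κe + μe) * hB + (κe + μe) * hC3 - 4 * κe * hCc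
  · exact absurd h hrne
end

section
/- The function K₀(x) = ∫₀^∞ exp(−x·cosh t) dt is twice differentiable on (0, ∞) and satisfies the modified Bessel differential equation of order zero: x·K₀''(x) + K₀'(x) − x·K₀(x) = 0 for every x > 0. -/
/-- Modified Bessel function of the first kind of order zero. -/
noncomputable def I0 (x : ℝ) : ℝ := ∑' k : ℕ, (x / 2) ^ (2 * k) / ((Nat.factorial k : ℝ)) ^ 2

/-- Modified Bessel function of the first kind of order one. -/
noncomputable def I1 (x : ℝ) : ℝ :=
  ∑' k : ℕ, (x / 2) ^ (2 * k + 1) / ((Nat.factorial k : ℝ) * (Nat.factorial (k + 1) : ℝ))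

/-- Modified Bessel function of the second kind of order zero. -/
noncomputable def K0 (x : ℝ) : ℝ := ∫ t in Set.Ioi (0 : ℝ), Real.exp (-x * Real.cosh t)

/-- Modified Bessel function of the second kind of order one. -/
noncomputable def K1 (x : ℝ) : ℝ :=
  ∫ t in Set.Ioi (0 : ℝ), Real.exp (-x * Real.cosh t) * Real.cosh t

/-!
Differentiating under the integral sign, which the decay of `exp (-x * cosh t)` justifies, gives
`K₀' x = -∫ exp (-x cosh t) cosh t` and `K₀'' x = ∫ exp (-x cosh t) cosh² t`. Integrating
`(exp (-x cosh t) sinh t)' = exp (-x cosh t) (cosh t - x cosh² t + x)` over `(0, ∞)`, where the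
boundary terms vanish, turns this into `-K₀' x = x (K₀'' x - K₀ x)`, which is the Bessel equation.
-/

open Real MeasureTheory Set Filter Metric
open scoped Nat Topology

theorem Real.self_le_cosh (t : ℝ) : t ≤ cosh t := by
  rcases le_total 0 t with ht | ht
  · exact (self_le_sinh_iff.2 ht).trans (sinh_lt_cosh t).le
  · exact ht.trans (cosh_pos t).le

theorem pow_le_factorial_div_pow_mul_exp {a c : ℝ} (ha : 0 < a) (hc : 0 ≤ c) (n : ℕ) :
    c ^ n ≤ n ! / a ^ n * exp (a * c) := by
  have h := Real.pow_div_factorial_le_exp (x := a * c) (by positivity) n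
  rw [div_le_iff₀ (by positivity), mul_pow] at h
  rw [div_mul_eq_mul_div, le_div_iff₀ (by positivity)]
  linarith

section CoshMoment

variable {x : ℝ}

noncomputable def coshMoment (n : ℕ) (x : ℝ) : ℝ :=
  ∫ t in Ioi (0 : ℝ), exp (-x * cosh t) * cosh t ^ n

theorem K0_eq_coshMoment_zero : K0 = coshMoment 0 := by
  funext x
  simp only [K0, coshMoment, pow_zero, mul_one]

/- Half of `exp (-x * cosh t)` absorbs the power of `cosh t`; the other half decays
since `t ≤ cosh t`. -/
theorem exp_neg_mul_cosh_mul_cosh_pow_le (n : ℕ) (hx : 0 < x) (t : ℝ) :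
    exp (-x * cosh t) * cosh t ^ n ≤ n ! / (x / 2) ^ n * exp (-(x / 2) * t) :=
  calc exp (-x * cosh t) * cosh t ^ n
      ≤ exp (-x * cosh t) * (n ! / (x / 2) ^ n * exp (x / 2 * cosh t)) := by
        gcongr
        exact pow_le_factorial_div_pow_mul_exp (by positivity) (cosh_pos t).le n
    _ = n ! / (x / 2) ^ n * exp (-(x / 2) * cosh t) := by
        rw [mul_left_comm, ← exp_add]
        congr 2
        ring
    _ ≤ n ! / (x / 2) ^ n * exp (-(x / 2) * t) := by
        gcongr n ! / (x / 2) ^ n * exp ?_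
        nlinarith [self_le_cosh t]

theorem integrableOn_exp_neg_mul_cosh_mul_cosh_pow (n : ℕ) (hx : 0 < x) (a : ℝ) :
    IntegrableOn (fun t ↦ exp (-x * cosh t) * cosh t ^ n) (Ioi a) := by
  refine ((exp_neg_integrableOn_Ioi a (by positivity : 0 < x / 2)).const_mul
    (n ! / (x / 2) ^ n)).mono' (by fun_prop) (ae_of_all _ fun t ↦ ?_)
  rw [norm_of_nonneg (by positivity)]
  exact exp_neg_mul_cosh_mul_cosh_pow_le n hx t

theorem hasDerivAt_coshMoment (n : ℕ) (hx : 0 < x) :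
    HasDerivAt (coshMoment n) (-coshMoment (n + 1) x) x := by
  have hderiv (t y : ℝ) : HasDerivAt (fun y ↦ exp (-y * cosh t) * cosh t ^ n)
      (-(exp (-y * cosh t) * cosh t ^ (n + 1))) y := by
    refine ((((hasDerivAt_neg y).mul_const (cosh t)).exp).mul_const (cosh t ^ n)).congr_deriv ?_
    ring
  have hbound (t : ℝ) (y : ℝ) (hy : y ∈ ball x (x / 2)) :
      ‖-(exp (-y * cosh t) * cosh t ^ (n + 1))‖ ≤ exp (-(x / 2) * cosh t) * cosh t ^ (n + 1) := by
    have hy : x / 2 ≤ y := by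
      linarith [(abs_lt.1 (mem_ball_iff_norm.1 hy)).1]
    rw [norm_neg, norm_of_nonneg (by positivity)]
    gcongr
  obtain ⟨-, hF⟩ := hasDerivAt_integral_of_dominated_loc_of_deriv_le (μ := volume.restrict (Ioi 0))
    (F := fun y t ↦ exp (-y * cosh t) * cosh t ^ n)
    (ball_mem_nhds x (by positivity : 0 < x / 2))
    (Eventually.of_forall fun y ↦ by fun_prop)
    (integrableOn_exp_neg_mul_cosh_mul_cosh_pow n hx 0) (by fun_prop)
    (ae_of_all _ hbound)
    (integrableOn_exp_neg_mul_cosh_mul_cosh_pow (n + 1) (by positivity : 0 < x / 2) 0)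
    (ae_of_all _ fun t y _ ↦ hderiv t y)
  rwa [integral_neg] at hF

theorem tendsto_exp_neg_mul_cosh_mul_sinh_atTop (hx : 0 < x) :
    Tendsto (fun t ↦ exp (-x * cosh t) * sinh t) atTop (𝓝 0) := by
  have hdecay : Tendsto (fun t ↦ 1 ! / (x / 2) ^ 1 * exp (-(x / 2) * t)) atTop (𝓝 0) := by
    simpa only [mul_zero, Function.comp_def, id] using (tendsto_exp_atBot.comp
      (tendsto_id.const_mul_atTop_of_neg (by linarith : -(x / 2) < 0))).const_mul (1 ! / (x / 2) ^ 1)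
  refine squeeze_zero_norm (fun t ↦ ?_) hdecay
  have habs : |sinh t| ≤ cosh t := (abs_sinh t).trans_le ((sinh_lt_cosh _).le.trans_eq (cosh_abs t))
  calc ‖exp (-x * cosh t) * sinh t‖ = exp (-x * cosh t) * |sinh t| := by
        rw [norm_mul, norm_of_nonneg (exp_pos _).le, norm_eq_abs]
    _ ≤ exp (-x * cosh t) * cosh t ^ 1 := by rw [pow_one]; gcongr
    _ ≤ _ := exp_neg_mul_cosh_mul_cosh_pow_le 1 hx t

theorem coshMoment_one_eq (hx : 0 < x) :
    coshMoment 1 x = x * (coshMoment 2 x - coshMoment 0 x) := by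
  set g : ℕ → ℝ → ℝ := fun n t ↦ exp (-x * cosh t) * cosh t ^ n
  have hg (n : ℕ) : IntegrableOn (g n) (Ioi 0) := integrableOn_exp_neg_mul_cosh_mul_cosh_pow n hx 0
  have hderiv (t : ℝ) : HasDerivAt (fun t ↦ exp (-x * cosh t) * sinh t)
      (g 1 t - x * g 2 t + x * g 0 t) t := by
    -- the derivative is `exp (-x * cosh t) * (cosh t - x * sinh t ^ 2)`, and `sinh² = cosh² - 1`
    refine ((((hasDerivAt_cosh t).const_mul (-x)).exp).mul (hasDerivAt_sinh t)).congr_deriv ?_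
    linear_combination (x * exp (-x * cosh t)) * cosh_sq t
  have hg12 : IntegrableOn (fun t ↦ g 1 t - x * g 2 t) (Ioi 0) := (hg 1).sub ((hg 2).const_mul x)
  have hIBP := integral_Ioi_of_hasDerivAt_of_tendsto' (fun t _ ↦ hderiv t)
    (hg12.add ((hg 0).const_mul x)) (tendsto_exp_neg_mul_cosh_mul_sinh_atTop hx)
  rw [integral_add hg12 ((hg 0).const_mul x), integral_sub (hg 1) ((hg 2).const_mul x),
    integral_const_mul, integral_const_mul] at hIBP
  simp only [sinh_zero, mul_zero, sub_zero] at hIBP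
  simp only [coshMoment]
  linarith

theorem hasDerivAt_K0 (hx : 0 < x) : HasDerivAt K0 (-coshMoment 1 x) x :=
  K0_eq_coshMoment_zero ▸ hasDerivAt_coshMoment 0 hx

theorem hasDerivAt_deriv_K0 (hx : 0 < x) : HasDerivAt (deriv K0) (coshMoment 2 x) x := by
  have hK0' : deriv K0 =ᶠ[𝓝 x] fun y ↦ -coshMoment 1 y := by
    filter_upwards [Ioi_mem_nhds hx] with y hy
    exact (hasDerivAt_K0 hy).deriv
  simpa only [neg_neg] using (hasDerivAt_coshMoment 1 hx).neg.congr_of_eventuallyEq hK0'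

end CoshMoment

/-- `K₀` is twice differentiable on `(0,∞)` and satisfies the modified Bessel equation of
order zero there: `x K₀'' + K₀' − x K₀ = 0`. -/
theorem stmt9 :
    (∀ x ∈ Set.Ioi (0 : ℝ), DifferentiableAt ℝ K0 x) ∧
    (∀ x ∈ Set.Ioi (0 : ℝ), DifferentiableAt ℝ (deriv K0) x) ∧
    (∀ x : ℝ, 0 < x → x * deriv (deriv K0) x + deriv K0 x - x * K0 x = 0) := by
  refine ⟨fun x hx ↦ (hasDerivAt_K0 hx).differentiableAt,
    fun x hx ↦ (hasDerivAt_deriv_K0 hx).differentiableAt, fun x hx ↦ ?_⟩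
  rw [(hasDerivAt_deriv_K0 hx).deriv, (hasDerivAt_K0 hx).deriv, K0_eq_coshMoment_zero,
    coshMoment_one_eq hx]
  ring
end

section
/- Let μ_e > 0, μ_m > 0, μ_c ≥ 0, m > 0, and let P_rθ, P_θr : J → ℝ be smooth functions on a nonempty open interval J ⊆ (0, ∞) satisfying the off-diagonal equilibrium system (O1), (O2), (O3). Then the sum S := P_rθ + P_θr satisfies S'(r) + 2·S(r)/r = 0 on J, hence there exists a constant C₄ ∈ ℝ with S(r) = C₄/r² for all r ∈ J; moreover μ_c·(P_rθ − P_θr)'(r) = 0 on J, so that if μ_c > 0 then P_rθ − P_θr is constant on J. -/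
/-- A function with vanishing derivative on a convex open set is constant there. -/
lemma const_of_hasDerivAt_zero_on {s : Set ℝ} (hs : Convex ℝ s) (ho : IsOpen s)
    {f : ℝ → ℝ} (h : ∀ x ∈ s, HasDerivAt f 0 x) {x y : ℝ} (hx : x ∈ s) (hy : y ∈ s) :
    f x = f y := by
  apply hs.is_const_of_fderivWithin_eq_zero
    (fun z hz => (h z hz).differentiableAt.differentiableWithinAt) ?_ hx hy
  intro z hz
  rw [fderivWithin_of_isOpen ho hz, (h z hz).hasFDerivAt.fderiv]
  ext
  simp

/-- For the off-diagonal system (O1)-(O3): the sum `S = P_rθ + P_θr` satisfies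
`S' + 2S/r = 0`, hence `S = C₄/r²`; moreover `μ_c (P_rθ − P_θr)' = 0`, so if `μ_c > 0`
then `P_rθ − P_θr` is constant on `J`. -/
theorem stmt16 (μe μm μc m : ℝ) (hμe : 0 < μe) (hμm : 0 < μm) (hμc : 0 ≤ μc) (hm : 0 < m)
    (J : Set ℝ) (p q : ℝ) (hJ : J = Set.Ioo p q) (hne : J.Nonempty) (hsub : J ⊆ Set.Ioi 0)
    (Prt Ptr : ℝ → ℝ) (hPrt : ContDiffOn ℝ (⊤ : ℕ∞) Prt J) (hPtr : ContDiffOn ℝ (⊤ : ℕ∞) Ptr J)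
    (hO1 : ∀ r ∈ J, μe * (deriv Prt r + deriv Ptr r + 2 * (Prt r + Ptr r) / r)
        = μc * (deriv Prt r - deriv Ptr r))
    (hO2 : ∀ r ∈ J, (μe + μm) * (Prt r + Ptr r) + μc * (Prt r - Ptr r)
        + m * (deriv Ptr r / r + (Prt r + Ptr r) / r ^ 2) = 0)
    (hO3 : ∀ r ∈ J, (μe + μm) * (Prt r + Ptr r) + μc * (Ptr r - Prt r)
        + m * (-deriv (deriv Ptr) r + (Prt r + Ptr r) / r ^ 2
          - deriv Prt r / r - deriv Ptr r / r) = 0) :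
    (∀ r ∈ J, deriv (fun s => Prt s + Ptr s) r + 2 * (Prt r + Ptr r) / r = 0) ∧
    (∃ C₄ : ℝ, ∀ r ∈ J, Prt r + Ptr r = C₄ / r ^ 2) ∧
    (∀ r ∈ J, μc * deriv (fun s => Prt s - Ptr s) r = 0) ∧
    (0 < μc → ∃ C₅ : ℝ, ∀ r ∈ J, Prt r - Ptr r = C₅) := by
  have hJopen : IsOpen J := hJ ▸ isOpen_Ioo
  have hJconv : Convex ℝ J := hJ ▸ convex_Ioo p q
  have hdPtr : ContDiffOn ℝ (⊤ : ℕ∞) (deriv Ptr) J := hPtr.deriv_of_isOpen hJopen (by simp)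
  -- pointwise derivatives
  have hP' : ∀ r ∈ J, HasDerivAt Prt (deriv Prt r) r := fun r hr =>
    ((hPrt.contDiffAt (hJopen.mem_nhds hr)).differentiableAt (by simp)).hasDerivAt
  have hQ' : ∀ r ∈ J, HasDerivAt Ptr (deriv Ptr r) r := fun r hr =>
    ((hPtr.contDiffAt (hJopen.mem_nhds hr)).differentiableAt (by simp)).hasDerivAt
  have hQ'' : ∀ r ∈ J, HasDerivAt (deriv Ptr) (deriv (deriv Ptr) r) r := fun r hr =>
    ((hdPtr.contDiffAt (hJopen.mem_nhds hr)).differentiableAt (by simp)).hasDerivAt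
  -- the key pointwise computation
  have key : ∀ r ∈ J, (deriv Prt r + deriv Ptr r) + 2 * (Prt r + Ptr r) / r = 0 ∧
      μc * (deriv Prt r - deriv Ptr r) = 0 := by
    intro r hr
    have hrpos : (0:ℝ) < r := hsub hr
    have hr0 : r ≠ 0 := ne_of_gt hrpos
    set a := Prt r; set b := Ptr r
    set a' := deriv Prt r; set b' := deriv Ptr r
    set b'' := deriv (deriv Ptr) r
    -- differentiate (O2)
    have hF : HasDerivAt (fun s => (μe + μm) * (Prt s + Ptr s) + μc * (Prt s - Ptr s)
        + m * (deriv Ptr s / s + (Prt s + Ptr s) / s ^ 2))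
        ((μe + μm) * (a' + b') + μc * (a' - b')
          + m * ((b'' * r - b' * 1) / r ^ 2
            + ((a' + b') * r ^ 2 - (a + b) * (2 * r ^ 1)) / (r ^ 2) ^ 2)) r := by
      exact ((((hP' r hr).add (hQ' r hr)).const_mul (μe + μm)).add
        (((hP' r hr).sub (hQ' r hr)).const_mul μc)).add
        ((((hQ'' r hr).div (hasDerivAt_id r) hr0).add
          (((hP' r hr).add (hQ' r hr)).div (hasDerivAt_pow 2 r) (by positivity))).const_mul m)
    have hF0 : HasDerivAt (fun s => (μe + μm) * (Prt s + Ptr s) + μc * (Prt s - Ptr s)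
        + m * (deriv Ptr s / s + (Prt s + Ptr s) / s ^ 2)) 0 r := by
      have hev : (fun s => (μe + μm) * (Prt s + Ptr s) + μc * (Prt s - Ptr s)
          + m * (deriv Ptr s / s + (Prt s + Ptr s) / s ^ 2)) =ᶠ[nhds r] fun _ => (0:ℝ) := by
        filter_upwards [hJopen.mem_nhds hr] with s hs using hO2 s hs
      exact (hasDerivAt_const r (0:ℝ)).congr_of_eventuallyEq hev
    have hE := hF.unique hF0
    -- cleared polynomial forms
    have h1 := hO1 r hr
    have h2 := hO2 r hr
    have h3 := hO3 r hr
    have e1 : μe * ((a' + b') * r + 2 * (a + b)) = μc * (a' - b') * r := by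
      field_simp at h1 ⊢
      linear_combination h1
    have e2 : (μe + μm) * (a + b) * r ^ 3 + μc * (a - b) * r ^ 3
        + m * (b' * r ^ 2 + (a + b) * r) = 0 := by
      field_simp at h2
      linear_combination r * h2
    have e3 : (μe + μm) * (a + b) * r ^ 4 + μc * (b - a) * r ^ 4
        + m * (-(b'' * r ^ 4) + (a + b) * r ^ 2 - a' * r ^ 3 - b' * r ^ 3) = 0 := by
      field_simp at h3
      linear_combination r ^ 2 * h3
    have e4 : (μe + μm) * (a' + b') * r ^ 6 + μc * (a' - b') * r ^ 6
        + m * (b'' * r ^ 5 - b' * r ^ 4 + (a' + b') * r ^ 4 - 2 * (a + b) * r ^ 3) = 0 := by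
      have hE' : (μe + μm) * (a' + b') + μc * (a' - b')
          + m * ((b'' * r - b' * 1) / r ^ 2
            + ((a' + b') * r ^ 2 - (a + b) * (2 * r ^ 1)) / (r ^ 2) ^ 2) = 0 := hE
      field_simp at hE'
      linear_combination r ^ 3 * hE'
    have hkey : (2 * μe + μm) * ((a' + b') * r + 2 * (a + b)) * r ^ 5 = 0 := by
      linear_combination e4 + r ^ 2 * e2 + r * e3 + r ^ 5 * e1
    have hA : (a' + b') * r + 2 * (a + b) = 0 := by
      have h2e : (0:ℝ) < 2 * μe + μm := by linarith
      have := mul_eq_zero.mp hkey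
      rcases this with h | h
      · rcases mul_eq_zero.mp h with h' | h'
        · exact absurd h' (ne_of_gt h2e)
        · exact h'
      · exact absurd h (pow_ne_zero 5 hr0)
    constructor
    · field_simp
      linear_combination hA
    · have : μc * (a' - b') * r = 0 := by linear_combination μe * hA - e1
      rcases mul_eq_zero.mp this with h | h
      · exact h
      · exact absurd h hr0
  -- assemble conclusions
  have hsum : ∀ r ∈ J, deriv (fun s => Prt s + Ptr s) r = deriv Prt r + deriv Ptr r :=
    fun r hr => ((hP' r hr).add (hQ' r hr)).deriv
  have hdiff : ∀ r ∈ J, deriv (fun s => Prt s - Ptr s) r = deriv Prt r - deriv Ptr r :=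
    fun r hr => ((hP' r hr).sub (hQ' r hr)).deriv
  obtain ⟨r₀, hr₀⟩ := hne
  refine ⟨fun r hr => by rw [hsum r hr]; exact (key r hr).1, ?_, ?_, ?_⟩
  · -- S = C₄ / r²
    refine ⟨r₀ ^ 2 * (Prt r₀ + Ptr r₀), fun r hr => ?_⟩
    have hrpos : (0:ℝ) < r := hsub hr
    have hg : ∀ x ∈ J, HasDerivAt (fun s => s ^ 2 * (Prt s + Ptr s)) 0 x := by
      intro x hx
      have hxpos : (0:ℝ) < x := hsub hx
      have h := (hasDerivAt_pow 2 x).mul ((hP' x hx).add (hQ' x hx))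
      have hk := (key x hx).1
      have hA : (deriv Prt x + deriv Ptr x) * x + 2 * (Prt x + Ptr x) = 0 := by
        field_simp at hk
        linear_combination hk
      refine h.congr_deriv ?_
      push_cast
      norm_num
      linear_combination x * hA
    have := const_of_hasDerivAt_zero_on hJconv hJopen hg hr hr₀
    field_simp
    linear_combination this
  · exact fun r hr => by rw [hdiff r hr]; exact (key r hr).2
  · intro hμcpos
    refine ⟨Prt r₀ - Ptr r₀, fun r hr => ?_⟩
    have hg : ∀ x ∈ J, HasDerivAt (fun s => Prt s - Ptr s) 0 x := by
      intro x hx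
      have h := (hP' x hx).sub (hQ' x hx)
      have : deriv Prt x - deriv Ptr x = 0 := by
        have := (key x hx).2
        exact (mul_eq_zero.mp this).resolve_left (ne_of_gt hμcpos)
      rwa [this] at h
    exact const_of_hasDerivAt_zero_on hJconv hJopen hg hr hr₀
end

section
/- Let μ_e > 0, μ_m > 0, μ_c > 0, m > 0, and let P_rθ, P_θr : J → ℝ be smooth functions on a nonempty open interval J ⊆ (0, ∞) satisfying the off-diagonal equilibrium system (O1), (O2), (O3). If there exist two distinct points r_i, r_o ∈ J with P_rθ(r_i) = 0 and P_rθ(r_o) = 0, then P_rθ(r) = 0 and P_θr(r) = 0 for all r ∈ J. -/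
/-- For the off-diagonal system (O1)-(O3) with `μ_c > 0`: if `P_rθ` vanishes at two
distinct points of `J` (the consistent coupling boundary conditions), then
`P_rθ = P_θr = 0` on all of `J`. -/
theorem stmt17 (μe μm μc m : ℝ) (hμe : 0 < μe) (hμm : 0 < μm) (hμc : 0 < μc) (hm : 0 < m)
    (J : Set ℝ) (p q : ℝ) (hJ : J = Set.Ioo p q) (hne : J.Nonempty) (hsub : J ⊆ Set.Ioi 0)
    (Prt Ptr : ℝ → ℝ) (hPrt : ContDiffOn ℝ (⊤ : ℕ∞) Prt J) (hPtr : ContDiffOn ℝ (⊤ : ℕ∞) Ptr J)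
    (hO1 : ∀ r ∈ J, μe * (deriv Prt r + deriv Ptr r + 2 * (Prt r + Ptr r) / r)
        = μc * (deriv Prt r - deriv Ptr r))
    (hO2 : ∀ r ∈ J, (μe + μm) * (Prt r + Ptr r) + μc * (Prt r - Ptr r)
        + m * (deriv Ptr r / r + (Prt r + Ptr r) / r ^ 2) = 0)
    (hO3 : ∀ r ∈ J, (μe + μm) * (Prt r + Ptr r) + μc * (Ptr r - Prt r)
        + m * (-deriv (deriv Ptr) r + (Prt r + Ptr r) / r ^ 2
          - deriv Prt r / r - deriv Ptr r / r) = 0)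
    (ri ro : ℝ) (hri : ri ∈ J) (hro : ro ∈ J) (hne' : ri ≠ ro)
    (hbi : Prt ri = 0) (hbo : Prt ro = 0) :
    ∀ r ∈ J, Prt r = 0 ∧ Ptr r = 0 := by
  have hJopen : IsOpen J := by rw [hJ]; exact isOpen_Ioo
  set a := μe + μm with ha_def
  have ha : 0 < a := by positivity
  -- first derivatives
  have hu1 : ∀ r ∈ J, HasDerivAt Prt (deriv Prt r) r := fun r hr =>
    ((hPrt.contDiffAt (hJopen.mem_nhds hr)).differentiableAt (by simp)).hasDerivAt
  have hv1 : ∀ r ∈ J, HasDerivAt Ptr (deriv Ptr r) r := fun r hr =>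
    ((hPtr.contDiffAt (hJopen.mem_nhds hr)).differentiableAt (by simp)).hasDerivAt
  have hvd : ContDiffOn ℝ (⊤ : ℕ∞) (deriv Ptr) J := hPtr.deriv_of_isOpen hJopen (by simp)
  have hv2 : ∀ r ∈ J, HasDerivAt (deriv Ptr) (deriv (deriv Ptr) r) r := fun r hr =>
    ((hvd.contDiffAt (hJopen.mem_nhds hr)).differentiableAt (by simp)).hasDerivAt
  -- the derivative of the O2 identity, in denominator-cleared form
  have h4c : ∀ r ∈ J,
      (a * (deriv Prt r + deriv Ptr r) + μc * (deriv Prt r - deriv Ptr r)) * r ^ 3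
        + m * (deriv (deriv Ptr) r * r ^ 2 - deriv Ptr r * r
          + (deriv Prt r + deriv Ptr r) * r - 2 * (Prt r + Ptr r)) = 0 := by
    intro r hr
    have hr0 : r ≠ 0 := ne_of_gt (hsub hr)
    have hu := hu1 r hr
    have hv := hv1 r hr
    have hv' := hv2 r hr
    have hx : HasDerivAt (fun x : ℝ => x) 1 r := hasDerivAt_id r
    have hx2 : HasDerivAt (fun x : ℝ => x ^ 2) (2 * r) r := by
      simpa using hasDerivAt_pow 2 r
    have t1 : HasDerivAt (fun x => deriv Ptr x / x)
        ((deriv (deriv Ptr) r * r - deriv Ptr r * 1) / r ^ 2) r := hv'.div hx hr0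
    have t2 : HasDerivAt (fun x => (Prt x + Ptr x) / x ^ 2)
        (((deriv Prt r + deriv Ptr r) * r ^ 2 - (Prt r + Ptr r) * (2 * r)) / (r ^ 2) ^ 2) r :=
      (hu.add hv).div hx2 (pow_ne_zero 2 hr0)
    have hg : HasDerivAt (fun x => a * (Prt x + Ptr x) + μc * (Prt x - Ptr x)
        + m * (deriv Ptr x / x + (Prt x + Ptr x) / x ^ 2))
        (a * (deriv Prt r + deriv Ptr r) + μc * (deriv Prt r - deriv Ptr r)
          + m * ((deriv (deriv Ptr) r * r - deriv Ptr r * 1) / r ^ 2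
            + ((deriv Prt r + deriv Ptr r) * r ^ 2 - (Prt r + Ptr r) * (2 * r)) / (r ^ 2) ^ 2)) r :=
      (((hu.add hv).const_mul a).add ((hu.sub hv).const_mul μc)).add ((t1.add t2).const_mul m)
    have hg0 : HasDerivAt (fun x => a * (Prt x + Ptr x) + μc * (Prt x - Ptr x)
        + m * (deriv Ptr x / x + (Prt x + Ptr x) / x ^ 2)) 0 r := by
      refine (hasDerivAt_const r (0 : ℝ)).congr_of_eventuallyEq ?_
      filter_upwards [hJopen.mem_nhds hr] with x hx
      exact hO2 x hx
    have hzero := hg.unique hg0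
    have hexp : (a * (deriv Prt r + deriv Ptr r) + μc * (deriv Prt r - deriv Ptr r)) * r ^ 3
        + m * (deriv (deriv Ptr) r * r ^ 2 - deriv Ptr r * r
          + (deriv Prt r + deriv Ptr r) * r - 2 * (Prt r + Ptr r))
        = r ^ 3 * (a * (deriv Prt r + deriv Ptr r) + μc * (deriv Prt r - deriv Ptr r)
          + m * ((deriv (deriv Ptr) r * r - deriv Ptr r * 1) / r ^ 2
            + ((deriv Prt r + deriv Ptr r) * r ^ 2 - (Prt r + Ptr r) * (2 * r)) / (r ^ 2) ^ 2)) := by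
      field_simp
      ring
    rw [hexp, hzero, mul_zero]
  -- cleared forms of O1, O2, O3
  have h1c : ∀ r ∈ J, μe * ((deriv Prt r + deriv Ptr r) * r + 2 * (Prt r + Ptr r))
      = μc * (deriv Prt r - deriv Ptr r) * r := by
    intro r hr
    have hr0 : r ≠ 0 := ne_of_gt (hsub hr)
    have h := hO1 r hr
    field_simp at h
    linarith
  have h2c : ∀ r ∈ J, (a * (Prt r + Ptr r) + μc * (Prt r - Ptr r)) * r ^ 2
      + m * (deriv Ptr r * r + (Prt r + Ptr r)) = 0 := by
    intro r hr
    have hr0 : r ≠ 0 := ne_of_gt (hsub hr)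
    have h := hO2 r hr
    have hexp : (a * (Prt r + Ptr r) + μc * (Prt r - Ptr r)) * r ^ 2
        + m * (deriv Ptr r * r + (Prt r + Ptr r))
        = r ^ 2 * (a * (Prt r + Ptr r) + μc * (Prt r - Ptr r)
          + m * (deriv Ptr r / r + (Prt r + Ptr r) / r ^ 2)) := by
      field_simp
    rw [hexp, h, mul_zero]
  have h3c : ∀ r ∈ J, (a * (Prt r + Ptr r) + μc * (Ptr r - Prt r)) * r ^ 2
      + m * (-deriv (deriv Ptr) r * r ^ 2 + (Prt r + Ptr r)
        - deriv Prt r * r - deriv Ptr r * r) = 0 := by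
    intro r hr
    have hr0 : r ≠ 0 := ne_of_gt (hsub hr)
    have h := hO3 r hr
    have hexp : (a * (Prt r + Ptr r) + μc * (Ptr r - Prt r)) * r ^ 2
        + m * (-deriv (deriv Ptr) r * r ^ 2 + (Prt r + Ptr r)
          - deriv Prt r * r - deriv Ptr r * r)
        = r ^ 2 * (a * (Prt r + Ptr r) + μc * (Ptr r - Prt r)
          + m * (-deriv (deriv Ptr) r + (Prt r + Ptr r) / r ^ 2
            - deriv Prt r / r - deriv Ptr r / r)) := by
      field_simp
    rw [hexp, h, mul_zero]
  -- key combination: 2aS + r(aS' + cD') = 0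
  have hIV : ∀ r ∈ J, 2 * a * (Prt r + Ptr r)
      + r * (a * (deriv Prt r + deriv Ptr r) + μc * (deriv Prt r - deriv Ptr r)) = 0 := by
    intro r hr
    have hr0 : r ≠ 0 := ne_of_gt (hsub hr)
    have h2 := h2c r hr
    have h3 := h3c r hr
    have h4 := h4c r hr
    have hmul : (2 * a * (Prt r + Ptr r)
        + r * (a * (deriv Prt r + deriv Ptr r) + μc * (deriv Prt r - deriv Ptr r))) * r ^ 2
        = 0 := by linear_combination h2 + h3 + h4
    have := mul_eq_zero.mp hmul
    rcases this with h | h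
    · exact h
    · exact absurd h (pow_ne_zero 2 hr0)
  -- aS + cD = 0 on J
  have hR : ∀ r ∈ J, a * (Prt r + Ptr r) + μc * (Prt r - Ptr r) = 0 := by
    intro r hr
    have hr0 : r ≠ 0 := ne_of_gt (hsub hr)
    have h1 := h1c r hr
    have h2 := h2c r hr
    have hiv := hIV r hr
    -- (a+μe)(rS' + 2S) = 0
    have hP : r * (deriv Prt r + deriv Ptr r) + 2 * (Prt r + Ptr r) = 0 := by
      have hcomb : (a + μe) * (r * (deriv Prt r + deriv Ptr r) + 2 * (Prt r + Ptr r)) = 0 := by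
        linear_combination hiv + h1
      have := mul_eq_zero.mp hcomb
      rcases this with h | h
      · exact absurd h (ne_of_gt (by positivity))
      · exact h
    -- u' = v'
    have hQ : deriv Prt r - deriv Ptr r = 0 := by
      have hq : μc * (deriv Prt r - deriv Ptr r) * r = 0 := by
        linear_combination μe * hP - h1
      rcases mul_eq_zero.mp hq with h | h
      · rcases mul_eq_zero.mp h with h' | h'
        · exact absurd h' (ne_of_gt hμc)
        · exact h'
      · exact absurd h hr0
    have hfin : (a * (Prt r + Ptr r) + μc * (Prt r - Ptr r)) * r ^ 2 = 0 := by
      linear_combination h2 - (m / 2) * hP + (m * r / 2) * hQ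
    rcases mul_eq_zero.mp hfin with h | h
    · exact h
    · exact absurd h (pow_ne_zero 2 hr0)
  -- derivative of hR : aS' + cD' = 0
  have hR' : ∀ r ∈ J, a * (deriv Prt r + deriv Ptr r) + μc * (deriv Prt r - deriv Ptr r) = 0 := by
    intro r hr
    have hu := hu1 r hr
    have hv := hv1 r hr
    have hg : HasDerivAt (fun x => a * (Prt x + Ptr x) + μc * (Prt x - Ptr x))
        (a * (deriv Prt r + deriv Ptr r) + μc * (deriv Prt r - deriv Ptr r)) r :=
      ((hu.add hv).const_mul a).add ((hu.sub hv).const_mul μc)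
    have hg0 : HasDerivAt (fun x => a * (Prt x + Ptr x) + μc * (Prt x - Ptr x)) 0 r := by
      refine (hasDerivAt_const r (0 : ℝ)).congr_of_eventuallyEq ?_
      filter_upwards [hJopen.mem_nhds hr] with x hx
      exact hR x hx
    exact hg.unique hg0
  -- conclude
  intro r hr
  have hr0 : r ≠ 0 := ne_of_gt (hsub hr)
  have hiv := hIV r hr
  have h5 := hR' r hr
  have hS : Prt r + Ptr r = 0 := by
    have : 2 * a * (Prt r + Ptr r) = 0 := by
      rw [h5, mul_zero, add_zero] at hiv; exact hiv
    rcases mul_eq_zero.mp this with h | h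
    · exact absurd h (by positivity)
    · exact h
  have hD : Prt r - Ptr r = 0 := by
    have hr2 := hR r hr
    rw [hS, mul_zero, zero_add] at hr2
    rcases mul_eq_zero.mp hr2 with h | h
    · exact absurd h (ne_of_gt hμc)
    · exact h
  constructor <;> linarith
end
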